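/- arXiv:1805.07260 — 3 statements merged into one kernel-verified Lean document; each statement's English description precedes it below -/
import Mathlib

section
/- With a_k and b_k the truncation functions defined for k ∈ ℕ and α > 1, one has a_k(t)² ≥ t·b_k(t) for all t ≥ 0. -/
noncomputable def ak (k : ℕ) (α : ℝ) (t : ℝ) : ℝ :=
  if t < 1 / k then ((1 - α) / 2) * (k : ℝ) ^ ((α + 1) / 2) * (t + (1 + α) / (k * (1 - α)))
  else t ^ ((1 - α) / 2)

noncomputable def bk (k : ℕ) (α : ℝ) (t : ℝ) : ℝ :=
  if t < 1 / k then -α * (k : ℝ) ^ (α + 1) * (t - (1 + α) / (k * α))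
  else t ^ (-α)

theorem ak_sq_ge_t_bk (k : ℕ) (hk : 1 ≤ k) (α : ℝ) (hα : 1 < α) :
    ∀ t : ℝ, 0 ≤ t → (ak k α t) ^ 2 ≥ t * bk k α t := by
  intro t ht
  have hk0 : (0:ℝ) < (k:ℝ) := by exact_mod_cast Nat.lt_of_lt_of_le Nat.zero_lt_one hk
  unfold ak bk
  by_cases h : t < 1 / k
  · simp only [if_pos h]
    have hc : (0:ℝ) < (k:ℝ) ^ (α+1) := Real.rpow_pos_of_pos hk0 _
    have hKsq : ((k:ℝ) ^ ((α+1)/2))^2 = (k:ℝ) ^ (α+1) := by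
      rw [sq, ← Real.rpow_add hk0]; ring_nf
    have h1 : (1:ℝ) - α ≠ 0 := by nlinarith
    have h2 : α ≠ 0 := by nlinarith
    have h3 : (k:ℝ) ≠ 0 := ne_of_gt hk0
    have key : ((1 - α) / 2 * (t + (1 + α) / (k * (1 - α))))^2
        + α * t * (t - (1 + α) / (k * α)) = (1+α)^2/4 * (t - 1/k)^2 := by
      field_simp
      ring
    nlinarith [key, hKsq, hc, sq_nonneg (t - 1/(k:ℝ)),
      mul_nonneg (le_of_lt hc) (sq_nonneg (t - 1/(k:ℝ)))]
  · push_neg at h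
    simp only [if_neg (not_lt.mpr h)]
    have ht0 : (0:ℝ) < t := lt_of_lt_of_le (by positivity) h
    have e1 : (t ^ ((1-α)/2))^2 = t ^ ((1:ℝ)-α) := by
      rw [sq, ← Real.rpow_add ht0]; ring_nf
    have e2 : t * t ^ (-α) = t ^ ((1:ℝ)-α) := by
      nth_rewrite 1 [← Real.rpow_one t]
      rw [← Real.rpow_add ht0]; ring_nf
    rw [e1, e2]
end

section
/- Stampacchia's lemma: let φ : [k₀, ∞) → [0, ∞) be nonincreasing and suppose there exist constants C > 0, r > 0 and β > 1 such that for all h > k ≥ k₀, φ(h) ≤ C·φ(k)^β/(h-k)^r. Then φ(k₀ + d) = 0 for d^r = C·φ(k₀)^(β-1)·2^(rβ/(β-1)). -/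
theorem stampacchia (k₀ : ℝ) (φ : ℝ → ℝ) (C r β : ℝ)
    (hC : 0 < C) (hr : 0 < r) (hβ : 1 < β)
    (hmono : AntitoneOn φ (Set.Ici k₀))
    (hnonneg : ∀ k, k₀ ≤ k → 0 ≤ φ k)
    (hiter : ∀ h k, k₀ ≤ k → k < h → φ h ≤ C * φ k ^ β / (h - k) ^ r) :
    ∀ d > (0 : ℝ), d ^ r = C * φ k₀ ^ (β - 1) * 2 ^ (r * β / (β - 1)) →
      φ (k₀ + d) = 0 := by
  intro d hd hdr
  have hβ1 : (0:ℝ) < β - 1 := by linarith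
  have hφ0 : 0 ≤ φ k₀ := hnonneg k₀ le_rfl
  rcases eq_or_lt_of_le hφ0 with h0 | hφpos
  · exfalso
    rw [← h0, Real.zero_rpow (by positivity)] at hdr
    have hpos : (0:ℝ) < d ^ r := Real.rpow_pos_of_pos hd r
    rw [hdr] at hpos
    simp at hpos
  set μ := r / (β - 1) with hμ
  have hμpos : 0 < μ := div_pos hr hβ1
  -- the iteration points
  have hpow_pos : ∀ x : ℝ, (0:ℝ) < 2 ^ x := fun x => Real.rpow_pos_of_pos two_pos x
  have hpow_le_one : ∀ n : ℕ, (2:ℝ) ^ (-(n:ℝ)) ≤ 1 := by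
    intro n
    exact Real.rpow_le_one_of_one_le_of_nonpos one_le_two (neg_nonpos.mpr (Nat.cast_nonneg n))
  have hkn : ∀ n : ℕ, k₀ ≤ k₀ + d * (1 - 2 ^ (-(n:ℝ))) := by
    intro n
    nlinarith [hpow_le_one n, (hpow_pos (-(n:ℝ))).le]
  have key : ∀ n : ℕ, φ (k₀ + d * (1 - 2 ^ (-(n:ℝ)))) ≤ φ k₀ * 2 ^ (-(n:ℝ) * μ) := by
    intro n
    induction n with
    | zero => simp
    | succ n ih =>
      push_cast
      have hstep : k₀ + d * (1 - 2 ^ (-(n:ℝ))) < k₀ + d * (1 - 2 ^ (-((n:ℕ)+1:ℝ))) := by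
        have : (2:ℝ) ^ (-((n:ℕ)+1:ℝ)) < 2 ^ (-(n:ℝ)) := by
          apply Real.rpow_lt_rpow_left_iff (x := (2:ℝ)) one_lt_two |>.mpr
          push_cast; linarith
        nlinarith
      have hdiff : (k₀ + d * (1 - 2 ^ (-((n:ℕ)+1:ℝ)))) - (k₀ + d * (1 - 2 ^ (-(n:ℝ))))
          = d * 2 ^ (-((n:ℕ)+1:ℝ)) := by
        have h2 : (2:ℝ) ^ (-(n:ℝ)) = 2 ^ (-((n:ℕ)+1:ℝ)) * 2 := by
          rw [← Real.rpow_add_one (by norm_num : (2:ℝ) ≠ 0)]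
          ring_nf
        rw [h2]; ring
      have h1 := hiter _ _ (hkn n) hstep
      rw [hdiff] at h1
      have hφn : 0 ≤ φ (k₀ + d * (1 - 2 ^ (-(n:ℝ)))) := hnonneg _ (hkn n)
      have h2 : φ (k₀ + d * (1 - 2 ^ (-(n:ℝ)))) ^ β ≤ (φ k₀ * 2 ^ (-(n:ℝ) * μ)) ^ β :=
        Real.rpow_le_rpow hφn ih (by linarith)
      have hden : (0:ℝ) < (d * 2 ^ (-((n:ℕ)+1:ℝ))) ^ r :=
        Real.rpow_pos_of_pos (by positivity) r
      have h3 : φ (k₀ + d * (1 - 2 ^ (-((n:ℕ)+1:ℝ))))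
          ≤ C * (φ k₀ * 2 ^ (-(n:ℝ) * μ)) ^ β / (d * 2 ^ (-((n:ℕ)+1:ℝ))) ^ r := by
        refine h1.trans ?_
        gcongr
      refine h3.trans (le_of_eq ?_)
      -- the algebraic identity
      rw [Real.mul_rpow hφ0 (hpow_pos _).le, Real.mul_rpow hd.le (hpow_pos _).le,
        ← Real.rpow_mul (by norm_num : (0:ℝ) ≤ 2),
        ← Real.rpow_mul (by norm_num : (0:ℝ) ≤ 2), hdr,
        div_eq_iff (by positivity)]
      have e1 : φ k₀ ^ β = φ k₀ ^ (1:ℝ) * φ k₀ ^ (β - 1) := by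
        rw [← Real.rpow_add hφpos]; norm_num
      have e2 : (2:ℝ) ^ (-((n:ℝ)+1)*μ) * (2:ℝ) ^ (r*β/(β-1)) * (2:ℝ) ^ (-((n:ℝ)+1)*r)
          = (2:ℝ) ^ (-(n:ℝ)*μ*β) := by
        rw [← Real.rpow_add two_pos, ← Real.rpow_add two_pos]
        congr 1
        rw [hμ]
        field_simp
        ring
      rw [e1, ← e2, Real.rpow_one]
      ring
  -- pass to the limit
  have hle : ∀ n : ℕ, φ (k₀ + d) ≤ φ k₀ * 2 ^ (-(n:ℝ) * μ) := by
    intro n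
    refine (hmono (hkn n) (by simp; linarith) ?_).trans (key n)
    nlinarith [(hpow_pos (-(n:ℝ))).le]
  have htend : Filter.Tendsto (fun n : ℕ => φ k₀ * 2 ^ (-(n:ℝ) * μ)) Filter.atTop (nhds 0) := by
    have : ∀ n : ℕ, φ k₀ * 2 ^ (-(n:ℝ) * μ) = φ k₀ * ((2:ℝ) ^ (-μ)) ^ n := by
      intro n
      rw [← Real.rpow_natCast ((2:ℝ) ^ (-μ)) n, ← Real.rpow_mul (by norm_num : (0:ℝ) ≤ 2)]
      ring_nf
    simp_rw [this]
    rw [show (0:ℝ) = φ k₀ * 0 by ring]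
    apply Filter.Tendsto.const_mul
    apply tendsto_pow_atTop_nhds_zero_of_lt_one (hpow_pos _).le
    rw [Real.rpow_neg (by norm_num), inv_lt_one_iff₀]
    right
    exact Real.one_lt_rpow_iff_of_pos two_pos |>.mpr (Or.inl ⟨one_lt_two, hμpos⟩)
  have h0' : φ (k₀ + d) ≤ 0 :=
    le_of_tendsto_of_tendsto' tendsto_const_nhds htend hle
  exact le_antisymm h0' (hnonneg _ (by linarith))
end

section
/- Let N ≥ 1 be an integer, q > 1, p_N > q, δ > N(q-1)(p_N-1)/4, and additionally for each i, p_i(N(q-1)+4) - N²(q-1) > 0 and δ > N²(q-1)(p_i-1)/(p_i(N(q-1)+4) - N²(q-1)). Then the open interval (l_1, l_2) with l_1 = (p_N-q)/2 and l_2 = 2δ/(N(q-1)) - (q-1)/2 is nonempty, and there exists β ∈ (l_1, l_2) such that N - p_i·(2β + δ + q - 1)/(δ + p_i - 1) < 0 simultaneously for all i = 1, ..., N. -/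
theorem simultaneous_beta_choice (n : ℕ) (p : Fin (n + 1) → ℝ)
    (hp2 : ∀ i, 2 ≤ p i) (hmono : Monotone p) (q δ : ℝ)
    (hq : q = (∑ i, p i) / (n + 1)) (hq1 : 1 < q)
    (hpNq : q < p (Fin.last n))
    (hδA : δ > ((n : ℝ) + 1) * (q - 1) * (p (Fin.last n) - 1) / 4)
    (hpos : ∀ i, p i * (((n : ℝ) + 1) * (q - 1) + 4) - ((n : ℝ) + 1) ^ 2 * (q - 1) > 0)
    (hδI : ∀ i, δ > ((n : ℝ) + 1) ^ 2 * (q - 1) * (p i - 1) /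
      (p i * (((n : ℝ) + 1) * (q - 1) + 4) - ((n : ℝ) + 1) ^ 2 * (q - 1))) :
    (p (Fin.last n) - q) / 2 < 2 * δ / (((n : ℝ) + 1) * (q - 1)) - (q - 1) / 2 ∧
    ∃ β ∈ Set.Ioo ((p (Fin.last n) - q) / 2)
        (2 * δ / (((n : ℝ) + 1) * (q - 1)) - (q - 1) / 2),
      ∀ i, ((n : ℝ) + 1) - p i * (2 * β + δ + q - 1) / (δ + p i - 1) < 0 := by
  set N : ℝ := (n : ℝ) + 1 with hN
  have hNpos : 0 < N := by positivity
  have hq1' : 0 < q - 1 := by linarith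
  have hNq : 0 < N * (q - 1) := by positivity
  have hpipos : ∀ i, 0 < p i := fun i => lt_of_lt_of_le (by norm_num) (hp2 i)
  have hdpi : ∀ i, 0 < δ + p i - 1 := by
    intro i
    have h4 : 0 < N * (q - 1) * (p (Fin.last n) - 1) / 4 := by
      have : 0 < p (Fin.last n) - 1 := by linarith [hp2 (Fin.last n)]
      positivity
    have := hp2 i
    linarith
  have hδpos : 0 < δ := by
    have : 0 < N * (q - 1) * (p (Fin.last n) - 1) / 4 := by
      have : 0 < p (Fin.last n) - 1 := by linarith [hp2 (Fin.last n)]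
      positivity
    linarith
  set l1 : ℝ := (p (Fin.last n) - q) / 2 with hl1
  set l2 : ℝ := 2 * δ / (N * (q - 1)) - (q - 1) / 2 with hl2def
  set c : Fin (n + 1) → ℝ :=
    fun i => (N * (δ + p i - 1) - p i * (δ + q - 1)) / (2 * p i) with hc
  have hl2eq : l2 = (4 * δ - N * (q - 1) ^ 2) / (2 * (N * (q - 1))) := by
    rw [hl2def]; field_simp; ring
  have h12 : l1 < l2 := by
    rw [hl1, hl2eq, div_lt_div_iff₀ (by norm_num) (by positivity)]
    nlinarith [hδA]
  have hci : ∀ i, c i < l2 := by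
    intro i
    have key : N ^ 2 * (q - 1) * (p i - 1) <
        δ * (p i * (N * (q - 1) + 4) - N ^ 2 * (q - 1)) :=
      (div_lt_iff₀ (hpos i)).mp (hδI i)
    rw [hc, hl2eq, div_lt_div_iff₀ (by linarith [hpipos i]) (by positivity)]
    nlinarith [key, hpipos i]
  have hne : (Finset.univ : Finset (Fin (n + 1))).Nonempty := Finset.univ_nonempty
  set M : ℝ := max l1 (Finset.univ.sup' hne c) with hM
  have hMl2 : M < l2 := by
    apply max_lt h12
    exact (Finset.sup'_lt_iff hne).mpr fun i _ => hci i
  clear_value l1 l2 M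
  set β : ℝ := (M + l2) / 2 with hβ
  clear_value β
  have hMβ : M < β := by rw [hβ]; linarith
  have hβl2 : β < l2 := by rw [hβ]; linarith
  have hl1M : l1 ≤ M := by rw [hM]; exact le_max_left _ _
  have hl1β : l1 < β := lt_of_le_of_lt hl1M hMβ
  refine ⟨h12, β, ⟨hl1β, hβl2⟩, fun i => ?_⟩
  have hciM : c i ≤ M := by
    rw [hM]
    exact le_trans (Finset.le_sup' c (Finset.mem_univ i)) (le_max_right _ _)
  have hcβ : c i < β := lt_of_le_of_lt hciM hMβ
  have hkey : N * (δ + p i - 1) - p i * (δ + q - 1) < β * (2 * p i) :=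
    (div_lt_iff₀ (by linarith [hpipos i])).mp hcβ
  rw [sub_neg, lt_div_iff₀ (hdpi i)]
  nlinarith [hkey]
end
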